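/- arXiv:2501.03749 — 6 statements merged into one kernel-verified Lean document; each statement's English description precedes it below -/
import Mathlib

section
/- Let R be a Hermitian quartic form on C^2, i.e. a function R(X,Ȳ,Z,W̄) complex-linear in X,Z and conjugate-linear in Y,W, satisfying the Chern curvature symmetry R(X,Ȳ,Z,W̄) = conj(R(Y,X̄,W,Z̄)). Let Ric(X,Ȳ) = R(e₁,ē₁,X,Ȳ) + R(e₂,ē₂,X,Ȳ) for the standard basis e₁,e₂ (first Ricci contraction). Fix α,β ∈ ℝ with β ≠ 0 and c ∈ ℝ. Suppose that for every unit vector Z ∈ C², α·Ric(Z,Z̄) + β·R(Z,Z̄,Z,Z̄) = c. Then R(e₁,ē₂,e₁,ē₂) = 0. -/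
open BigOperators Finset

noncomputable section

namespace Stmt0

/-- Evaluation of a quartic form on `ℂ^n` given by its components:
complex-linear in slots 1,3, conjugate-linear in slots 2,4. -/
def eval {n : ℕ} (R : Fin n → Fin n → Fin n → Fin n → ℂ) (X Y Z W : Fin n → ℂ) : ℂ :=
  ∑ i, ∑ j, ∑ k, ∑ l,
    X i * (starRingEnd ℂ) (Y j) * Z k * (starRingEnd ℂ) (W l) * R i j k l

/-- First Ricci contraction: `Ric(X, Ȳ) = ∑ᵢ R(eᵢ, ēᵢ, X, Ȳ)`. -/
def ric {n : ℕ} (R : Fin n → Fin n → Fin n → Fin n → ℂ) (X Y : Fin n → ℂ) : ℂ :=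
  ∑ i, ∑ k, ∑ l, X k * (starRingEnd ℂ) (Y l) * R i i k l

/-! Along `Z(v) = (x₀, v x₁)` with `|v| = 1`, each term of the mixed curvature is a monomial
`v^d` with `|d| ≤ 2`, and `R(e₁,ē₂,e₁,ē₂)` and `R(e₂,ē₁,e₂,ē₁)` are the only terms with `d = ∓2`
(the Ricci term has `|d| ≤ 1`). Weighting the constant values at `v = 1, i, -1, -i` by `v²`
isolates `x₀² x̄₁² R(e₁,ē₂,e₁,ē₂) + x̄₀² x₁² R(e₂,ē₁,e₂,ē₁) = 0`; the choices
`x = (3/5, 4/5)` and `x = (1/3, 2(1+i)/3)` give the sum and the difference of the two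
components. -/

open Complex ComplexConjugate

def phaseShift (x : Fin 2 → ℂ) (v : ℂ) : Fin 2 → ℂ := ![x 0, v * x 1]

lemma sum_normSq_phaseShift (x : Fin 2 → ℂ) {v : ℂ} (hv : normSq v = 1) :
    ∑ i, normSq (phaseShift x v i) = ∑ i, normSq (x i) := by
  simp [phaseShift, Fin.sum_univ_two, hv]

def quarterTurnFilter (f : (Fin 2 → ℂ) → ℂ) (x : Fin 2 → ℂ) : ℂ :=
  f (phaseShift x 1) - f (phaseShift x I) + f (phaseShift x (-1)) - f (phaseShift x (-I))

lemma quarterTurnFilter_ric (R : Fin 2 → Fin 2 → Fin 2 → Fin 2 → ℂ) (x : Fin 2 → ℂ) :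
    quarterTurnFilter (fun Z => ric R Z Z) x = 0 := by
  simp only [quarterTurnFilter, ric, phaseShift, Fin.sum_univ_two, Matrix.cons_val_zero,
    Matrix.cons_val_one, map_mul, map_neg, map_one, conj_I]
  ring_nf
  simp only [I_sq]
  ring

lemma quarterTurnFilter_eval (R : Fin 2 → Fin 2 → Fin 2 → Fin 2 → ℂ) (x : Fin 2 → ℂ) :
    quarterTurnFilter (fun Z => eval R Z Z Z Z) x =
      4 * (x 0 ^ 2 * conj (x 1) ^ 2 * R 0 1 0 1 + conj (x 0) ^ 2 * x 1 ^ 2 * R 1 0 1 0) := by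
  simp only [quarterTurnFilter, eval, phaseShift, Fin.sum_univ_two, Matrix.cons_val_zero,
    Matrix.cons_val_one, map_mul, map_neg, map_one, conj_I]
  ring_nf
  simp only [I_sq, I_pow_four]
  ring

lemma quarterTurnFilter_linear_combination (f g : (Fin 2 → ℂ) → ℂ) (a b : ℂ) (x : Fin 2 → ℂ) :
    quarterTurnFilter (fun Z => a * f Z + b * g Z) x =
      a * quarterTurnFilter f x + b * quarterTurnFilter g x := by
  unfold quarterTurnFilter
  ring

lemma quarterTurnFilter_eq_zero_of_eqOn_sphere {f : (Fin 2 → ℂ) → ℂ} {c : ℂ}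
    (hf : ∀ Z : Fin 2 → ℂ, ∑ i, normSq (Z i) = 1 → f Z = c)
    {x : Fin 2 → ℂ} (hx : ∑ i, normSq (x i) = 1) : quarterTurnFilter f x = 0 := by
  have hf' : ∀ v : ℂ, normSq v = 1 → f (phaseShift x v) = c := fun v hv =>
    hf _ ((sum_normSq_phaseShift x hv).trans hx)
  simp only [quarterTurnFilter, hf' 1 (by simp), hf' I (by simp), hf' (-1) (by simp),
    hf' (-I) (by simp), sub_self, zero_add]

theorem constant_mixed_curvature_W1_vanishes_general
    (R : Fin 2 → Fin 2 → Fin 2 → Fin 2 → ℂ)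
    (α β c : ℝ) (hβ : β ≠ 0)
    (hconst : ∀ Z : Fin 2 → ℂ, (∑ i, Complex.normSq (Z i)) = 1 →
      (α : ℂ) * ric R Z Z + (β : ℂ) * eval R Z Z Z Z = (c : ℂ)) :
    R 0 1 0 1 = 0 := by
  have hphase : ∀ x : Fin 2 → ℂ, ∑ i, normSq (x i) = 1 →
      x 0 ^ 2 * conj (x 1) ^ 2 * R 0 1 0 1 + conj (x 0) ^ 2 * x 1 ^ 2 * R 1 0 1 0 = 0 := by
    intro x hx
    have h := quarterTurnFilter_eq_zero_of_eqOn_sphere hconst hx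
    rw [quarterTurnFilter_linear_combination, quarterTurnFilter_ric,
      quarterTurnFilter_eval] at h
    have hβ' : (β : ℂ) ≠ 0 := ofReal_ne_zero.mpr hβ
    simpa [hβ'] using h
  have hsum : R 0 1 0 1 + R 1 0 1 0 = 0 := by
    have h := hphase ![3 / 5, 4 / 5] (by simp [Fin.sum_univ_two]; norm_num)
    simp only [Matrix.cons_val_zero, Matrix.cons_val_one, map_div₀, map_ofNat] at h
    linear_combination (625 / 144) * h
  have hdiff : R 0 1 0 1 - R 1 0 1 0 = 0 := by
    have h := hphase ![1 / 3, 2 * (1 + I) / 3] (by simp [Fin.sum_univ_two, normSq_apply]; norm_num)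
    simp only [Matrix.cons_val_zero, Matrix.cons_val_one, map_div₀, map_mul, map_add, map_one,
      map_ofNat, conj_I] at h
    linear_combination (norm := (ring_nf; simp only [I_sq, I_pow_three]; ring_nf)) (81 * I / 8) * h
  linear_combination (hsum + hdiff) / 2

/-- If a Hermitian quartic form on `ℂ²` has constant mixed curvature
`α·Ric(Z,Z̄) + β·R(Z,Z̄,Z,Z̄) = c` on unit vectors (with `β ≠ 0`),
then `R(e₁,ē₂,e₁,ē₂) = 0`. -/
theorem constant_mixed_curvature_W1_vanishes
    (R : Fin 2 → Fin 2 → Fin 2 → Fin 2 → ℂ)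
    (hherm : ∀ i j k l, R i j k l = (starRingEnd ℂ) (R j i l k))
    (α β c : ℝ) (hβ : β ≠ 0)
    (hconst : ∀ Z : Fin 2 → ℂ, (∑ i, Complex.normSq (Z i)) = 1 →
      (α : ℂ) * ric R Z Z + (β : ℂ) * eval R Z Z Z Z = (c : ℂ)) :
    R 0 1 0 1 = 0 :=
  constant_mixed_curvature_W1_vanishes_general R α β c hβ hconst

end Stmt0
end
end

section
/- Let R be a Hermitian quartic form on C^2 (complex-linear in slots 1,3, conjugate-linear in slots 2,4, with R(X,Ȳ,Z,W̄) = conj(R(Y,X̄,W,Z̄))), and Ric its first Ricci contraction Ric(X,Ȳ) = Σᵢ R(eᵢ,ēᵢ,X,Ȳ). Fix α,β ∈ ℝ with β ≠ 0 and c ∈ ℝ, and suppose α·Ric(Z,Z̄) + β·R(Z,Z̄,Z,Z̄) = c for all unit Z ∈ C². Writing R_{ij̄kl̄} = R(eᵢ,ēⱼ,e_k,ē_l), then R_{1̄11̄1} + R_{2̄22̄2} − (R_{1̄12̄2} + R_{2̄21̄1} + R_{1̄22̄1} + R_{2̄11̄2}) = 0. -/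
open BigOperators Finset

noncomputable section

namespace Stmt1

/-- Evaluation of a quartic form on `ℂ^n` given by its components:
complex-linear in slots 1,3, conjugate-linear in slots 2,4. -/
def eval {n : ℕ} (R : Fin n → Fin n → Fin n → Fin n → ℂ) (X Y Z W : Fin n → ℂ) : ℂ :=
  ∑ i, ∑ j, ∑ k, ∑ l,
    X i * (starRingEnd ℂ) (Y j) * Z k * (starRingEnd ℂ) (W l) * R i j k l

/-- First Ricci contraction: `Ric(X, Ȳ) = ∑ᵢ R(eᵢ, ēᵢ, X, Ȳ)`. -/
def ric {n : ℕ} (R : Fin n → Fin n → Fin n → Fin n → ℂ) (X Y : Fin n → ℂ) : ℂ :=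
  ∑ i, ∑ k, ∑ l, X k * (starRingEnd ℂ) (Y l) * R i i k l

/-!
Write `Q(Z) = α Ric(Z, Z̄) + β R(Z, Z̄, Z, Z̄)` and evaluate `Q = c` at `e₁`, `e₂` and at the four
unit vectors `(e₁ + ω e₂)/√2`, `ω ∈ {1, i, -1, -i}`. Summing over the fourth roots of unity kills
every component in which `ω` and `ω̄` occur a different number of times, so in
`2 Q(e₁) + 2 Q(e₂) - ∑_ω Q((e₁ + ω e₂)/√2) = 0` the Ricci terms cancel and what remains is `β`
times the claimed combination of components.
-/

open Complex ComplexConjugate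

lemma eval_single {n : ℕ} (R : Fin n → Fin n → Fin n → Fin n → ℂ) (m : Fin n) :
    eval R (Pi.single m 1) (Pi.single m 1) (Pi.single m 1) (Pi.single m 1) = R m m m m := by
  simp [eval, Pi.single_apply]

lemma ric_single {n : ℕ} (R : Fin n → Fin n → Fin n → Fin n → ℂ) (m : Fin n) :
    ric R (Pi.single m 1) (Pi.single m 1) = ∑ i, R i i m m := by
  simp [ric, Pi.single_apply]

lemma sum_normSq_single {n : ℕ} (m : Fin n) :
    ∑ i, normSq ((Pi.single m 1 : Fin n → ℂ) i) = 1 := by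
  simp [Pi.single_apply]

def phaseVector (s : ℂ) (k : Fin 4) : Fin 2 → ℂ := ![s, s * ![1, I, -1, -I] k]

lemma sum_normSq_phaseVector (s : ℂ) (k : Fin 4) :
    ∑ i, normSq (phaseVector s k i) = 2 * normSq s := by
  fin_cases k <;> simp [phaseVector, Fin.sum_univ_two, normSq_mul] <;> ring

lemma sum_ric_phaseVector (R : Fin 2 → Fin 2 → Fin 2 → Fin 2 → ℂ) (s : ℂ) :
    ∑ k, ric R (phaseVector s k) (phaseVector s k) =
      4 * normSq s * ∑ i, (R i i 0 0 + R i i 1 1) := by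
  rw [← mul_conj]
  simp only [ric, phaseVector, Fin.sum_univ_two, Fin.sum_univ_four, Matrix.cons_val, map_mul,
    map_one, map_neg, conj_I]
  ring_nf
  simp only [I_sq]
  ring

lemma sum_eval_phaseVector (R : Fin 2 → Fin 2 → Fin 2 → Fin 2 → ℂ) (s : ℂ) :
    ∑ k, eval R (phaseVector s k) (phaseVector s k) (phaseVector s k) (phaseVector s k) =
      4 * normSq s ^ 2 *
        (R 0 0 0 0 + R 1 1 1 1 + R 0 0 1 1 + R 1 1 0 0 + R 0 1 1 0 + R 1 0 0 1) := by
  rw [← mul_conj]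
  simp only [eval, phaseVector, Fin.sum_univ_two, Fin.sum_univ_four, Matrix.cons_val, map_mul,
    map_one, map_neg, conj_I]
  ring_nf
  simp only [I_sq, I_pow_four]
  ring

theorem constant_mixed_curvature_W3_vanishes_general
    (R : Fin 2 → Fin 2 → Fin 2 → Fin 2 → ℂ)
    (α β c : ℝ) (hβ : β ≠ 0)
    (hconst : ∀ Z : Fin 2 → ℂ, (∑ i, Complex.normSq (Z i)) = 1 →
      (α : ℂ) * ric R Z Z + (β : ℂ) * eval R Z Z Z Z = (c : ℂ)) :
    R 0 0 0 0 + R 1 1 1 1 - (R 0 0 1 1 + R 1 1 0 0 + R 0 1 1 0 + R 1 0 0 1) = 0 := by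
  set s : ℂ := ((√(1 / 2) : ℝ) : ℂ)
  have hs : normSq s = 1 / 2 := by
    rw [normSq_ofReal, Real.mul_self_sqrt (by norm_num)]
  have he0 := hconst _ (sum_normSq_single 0)
  have he1 := hconst _ (sum_normSq_single 1)
  have hphase := sum_congr rfl fun k (_ : k ∈ univ) =>
    hconst (phaseVector s k) (by rw [sum_normSq_phaseVector, hs]; norm_num)
  rw [sum_add_distrib, ← mul_sum, ← mul_sum, sum_ric_phaseVector, sum_eval_phaseVector, hs,
    sum_const, card_univ, Fintype.card_fin] at hphase
  rw [ric_single, eval_single] at he0 he1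
  simp only [Fin.sum_univ_two] at he0 he1 hphase
  push_cast at hphase
  have key : (β : ℂ) * (R 0 0 0 0 + R 1 1 1 1 -
      (R 0 0 1 1 + R 1 1 0 0 + R 0 1 1 0 + R 1 0 0 1)) = 0 := by
    linear_combination 2 * he0 + 2 * he1 - hphase
  exact (mul_eq_zero.mp key).resolve_left (ofReal_ne_zero.mpr hβ)

/-- If a Hermitian quartic form on `ℂ²` has constant mixed curvature
`α·Ric(Z,Z̄) + β·R(Z,Z̄,Z,Z̄) = c` on unit vectors (with `β ≠ 0`),
then `R₁₁̄₁₁̄ + R₂₂̄₂₂̄ − (R₁₁̄₂₂̄ + R₂₂̄₁₁̄ + R₁₂̄₂₁̄ + R₂₁̄₁₂̄) = 0` (eq. (3.4)). -/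
theorem constant_mixed_curvature_W3_vanishes
    (R : Fin 2 → Fin 2 → Fin 2 → Fin 2 → ℂ)
    (hherm : ∀ i j k l, R i j k l = (starRingEnd ℂ) (R j i l k))
    (α β c : ℝ) (hβ : β ≠ 0)
    (hconst : ∀ Z : Fin 2 → ℂ, (∑ i, Complex.normSq (Z i)) = 1 →
      (α : ℂ) * ric R Z Z + (β : ℂ) * eval R Z Z Z Z = (c : ℂ)) :
    R 0 0 0 0 + R 1 1 1 1 - (R 0 0 1 1 + R 1 1 0 0 + R 0 1 1 0 + R 1 0 0 1) = 0 :=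
  constant_mixed_curvature_W3_vanishes_general R α β c hβ hconst

end Stmt1
end
end

section
/- Let R be a Hermitian quartic form on C^2 with the symmetry R(X,Ȳ,Z,W̄) = conj(R(Y,X̄,W,Z̄)), Ric its first Ricci contraction, α,β ∈ ℝ with β ≠ 0, c ∈ ℝ, and suppose α·Ric(Z,Z̄) + β·R(Z,Z̄,Z,Z̄) = c for all unit Z ∈ C². Then R(e₁,ē₂,e₂,ē₂) + R(e₂,ē₂,e₁,ē₂) − R(e₁,ē₂,e₁,ē₁) − R(e₁,ē₁,e₁,ē₂) = 0. -/
/-! Restrict the mixed curvature to the circles `u ↦ (x, y u)`, `|u| = 1`, with `x, y` real and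
`x² + y² = 1`. There it is a Laurent polynomial of degree at most 2 in `u`; being constant, its
`ū`-coefficient `x y (α Ric(e₁, ē₂) + β (x² (R₀₀₀₁ + R₀₁₀₀) + y² (R₀₁₁₁ + R₁₁₀₁)))` vanishes.
Comparing `(x, y) = (3/5, 4/5)` with `(4/5, 3/5)` eliminates the Ricci term and leaves
`β (R₀₁₁₁ + R₁₁₀₁ - R₀₁₀₀ - R₀₀₀₁) = 0`. -/

open BigOperators Finset

noncomputable section

namespace Stmt2

/-- Evaluation of a quartic form on `ℂ^n` given by its components:
complex-linear in slots 1,3, conjugate-linear in slots 2,4. -/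
def eval {n : ℕ} (R : Fin n → Fin n → Fin n → Fin n → ℂ) (X Y Z W : Fin n → ℂ) : ℂ :=
  ∑ i, ∑ j, ∑ k, ∑ l,
    X i * (starRingEnd ℂ) (Y j) * Z k * (starRingEnd ℂ) (W l) * R i j k l

/-- First Ricci contraction: `Ric(X, Ȳ) = ∑ᵢ R(eᵢ, ēᵢ, X, Ȳ)`. -/
def ric {n : ℕ} (R : Fin n → Fin n → Fin n → Fin n → ℂ) (X Y : Fin n → ℂ) : ℂ :=
  ∑ i, ∑ k, ∑ l, X k * (starRingEnd ℂ) (Y l) * R i i k l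

open Complex

/-- Sampled at the fourth roots of unity, this extracts the coefficient of `ū` from
`f u = ∑_{|k| ≤ 2} a_k uᵏ` restricted to `|u| = 1` (where `ū = u⁻¹`). -/
def conjCoeff (f : ℂ → ℂ) : ℂ := (f 1 + I * f I - f (-1) - I * f (-I)) / 4

theorem ric_conjCoeff (R : Fin 2 → Fin 2 → Fin 2 → Fin 2 → ℂ) (x y : ℝ) :
    conjCoeff (fun u => ric R ![x, y * u] ![x, y * u]) = x * y * (R 0 0 0 1 + R 1 1 0 1) := by
  simp only [conjCoeff, ric, Fin.sum_univ_two, Matrix.cons_val_zero, Matrix.cons_val_one,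
    map_mul, map_neg, map_one, conj_ofReal, conj_I]
  ring_nf
  simp only [I_sq]
  ring

theorem eval_conjCoeff (R : Fin 2 → Fin 2 → Fin 2 → Fin 2 → ℂ) (x y : ℝ) :
    conjCoeff (fun u => eval R ![x, y * u] ![x, y * u] ![x, y * u] ![x, y * u]) =
      x * y * (x ^ 2 * (R 0 0 0 1 + R 0 1 0 0) + y ^ 2 * (R 0 1 1 1 + R 1 1 0 1)) := by
  simp only [conjCoeff, eval, Fin.sum_univ_two, Matrix.cons_val_zero, Matrix.cons_val_one,
    map_mul, map_neg, map_one, conj_ofReal, conj_I]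
  ring_nf
  simp only [I_sq, I_pow_four]
  ring

theorem sum_normSq_rotate {x y : ℝ} (hxy : x ^ 2 + y ^ 2 = 1) {u : ℂ} (hu : normSq u = 1) :
    ∑ i, normSq (![(x : ℂ), y * u] i) = 1 := by
  simp only [Fin.sum_univ_two, Matrix.cons_val_zero, Matrix.cons_val_one, map_mul,
    normSq_ofReal, hu]
  linear_combination hxy

def ConstantMixedCurvature (R : Fin 2 → Fin 2 → Fin 2 → Fin 2 → ℂ) (α β c : ℝ) : Prop :=
  ∀ Z : Fin 2 → ℂ, (∑ i, normSq (Z i)) = 1 →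
    (α : ℂ) * ric R Z Z + (β : ℂ) * eval R Z Z Z Z = (c : ℂ)

theorem ConstantMixedCurvature.conjCoeff_eq_zero {R : Fin 2 → Fin 2 → Fin 2 → Fin 2 → ℂ}
    {α β c : ℝ} (hconst : ConstantMixedCurvature R α β c) {x y : ℝ} (hxy : x ^ 2 + y ^ 2 = 1) :
    x * y * (α * (R 0 0 0 1 + R 1 1 0 1) +
      β * (x ^ 2 * (R 0 0 0 1 + R 0 1 0 0) + y ^ 2 * (R 0 1 1 1 + R 1 1 0 1))) = 0 := by
  let f u := (α : ℂ) * ric R ![x, y * u] ![x, y * u] +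
    (β : ℂ) * eval R ![x, y * u] ![x, y * u] ![x, y * u] ![x, y * u]
  have hf : ∀ u : ℂ, normSq u = 1 → f u = c := fun u hu =>
    hconst _ (sum_normSq_rotate hxy hu)
  have hzero : conjCoeff f = 0 := by
    rw [conjCoeff, hf 1 (by simp), hf I (by simp), hf (-1) (by simp), hf (-I) (by simp)]
    ring
  have hlin : conjCoeff f = α * conjCoeff (fun u => ric R ![x, y * u] ![x, y * u]) +
      β * conjCoeff (fun u => eval R ![x, y * u] ![x, y * u] ![x, y * u] ![x, y * u]) := by
    simp only [conjCoeff, f]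
    ring
  rw [hlin, ric_conjCoeff, eval_conjCoeff] at hzero
  linear_combination hzero

theorem constant_mixed_curvature_W2_vanishes_general
    (R : Fin 2 → Fin 2 → Fin 2 → Fin 2 → ℂ)
    (α β c : ℝ) (hβ : β ≠ 0)
    (hconst : ∀ Z : Fin 2 → ℂ, (∑ i, Complex.normSq (Z i)) = 1 →
      (α : ℂ) * ric R Z Z + (β : ℂ) * eval R Z Z Z Z = (c : ℂ)) :
    R 0 1 1 1 + R 1 1 0 1 - R 0 1 0 0 - R 0 0 0 1 = 0 := by
  have hcmc : ConstantMixedCurvature R α β c := hconst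
  have h₁ := hcmc.conjCoeff_eq_zero (x := 3 / 5) (y := 4 / 5) (by norm_num)
  have h₂ := hcmc.conjCoeff_eq_zero (x := 4 / 5) (y := 3 / 5) (by norm_num)
  push_cast at h₁ h₂
  have hW : (β : ℂ) * (R 0 1 1 1 + R 1 1 0 1 - R 0 1 0 0 - R 0 0 0 1) = 0 := by
    linear_combination (625 / 84 : ℂ) * (h₁ - h₂)
  exact (mul_eq_zero.mp hW).resolve_left (by exact_mod_cast hβ)

/-- If a Hermitian quartic form on `ℂ²` has constant mixed curvature
`α·Ric(Z,Z̄) + β·R(Z,Z̄,Z,Z̄) = c` on unit vectors (with `β ≠ 0`),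
then `R(e₁,ē₂,e₂,ē₂) + R(e₂,ē₂,e₁,ē₂) − R(e₁,ē₂,e₁,ē₁) − R(e₁,ē₁,e₁,ē₂) = 0`
(vanishing of `W⁻₂`). -/
theorem constant_mixed_curvature_W2_vanishes
    (R : Fin 2 → Fin 2 → Fin 2 → Fin 2 → ℂ)
    (hherm : ∀ i j k l, R i j k l = (starRingEnd ℂ) (R j i l k))
    (α β c : ℝ) (hβ : β ≠ 0)
    (hconst : ∀ Z : Fin 2 → ℂ, (∑ i, Complex.normSq (Z i)) = 1 →
      (α : ℂ) * ric R Z Z + (β : ℂ) * eval R Z Z Z Z = (c : ℂ)) :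
    R 0 1 1 1 + R 1 1 0 1 - R 0 1 0 0 - R 0 0 0 1 = 0 :=
  constant_mixed_curvature_W2_vanishes_general R α β c hβ hconst

end Stmt2
end
end

section
/- Let n ≥ 1 and let R be a quartic form on C^n with Hermitian symmetry R_{ij̄kl̄} = conj(R_{jīlk̄}), satisfying the symmetrized identity α(R_{ij̄} g_{kl̄} + R_{kj̄} g_{il̄} + R_{il̄} g_{kj̄} + R_{kl̄} g_{ij̄}) + β(R_{ij̄kl̄} + R_{kj̄il̄} + R_{il̄kj̄} + R_{kl̄ij̄}) = 2c(g_{ij̄} g_{kl̄} + g_{il̄} g_{kj̄}) for all i,j,k,l, where Ric⁽¹⁾_{ij̄} = Σₖ R_{ij̄kk̄}, Ric⁽²⁾_{kl̄} = Σᵢ R_{iīkl̄}, Ric⁽³⁾_{il̄} = Σₖ R_{ik̄kl̄}, Ric⁽⁴⁾_{kj̄} = Σᵢ R_{ij̄kī}, and u = trace of Ric⁽¹⁾. Then (α(n+2)+β)·Ric⁽¹⁾ + β·Ric⁽²⁾ + β·(Ric⁽³⁾ + Ric⁽⁴⁾) = (2(n+1)c − αu)·g as Hermitian matrices. -/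
open BigOperators Finset

noncomputable section

namespace Stmt4

/-- First Chern Ricci contraction: `Ric⁽¹⁾_{ij̄} = ∑ₖ R_{ij̄kk̄}`. -/
def ric₁ {n : ℕ} (R : Fin n → Fin n → Fin n → Fin n → ℂ) (i j : Fin n) : ℂ :=
  ∑ k, R i j k k

/-- Second Chern Ricci contraction: `Ric⁽²⁾_{kl̄} = ∑ᵢ R_{iīkl̄}`. -/
def ric₂ {n : ℕ} (R : Fin n → Fin n → Fin n → Fin n → ℂ) (k l : Fin n) : ℂ :=
  ∑ i, R i i k l

/-- Third Chern Ricci contraction: `Ric⁽³⁾_{il̄} = ∑ₖ R_{ik̄kl̄}`. -/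
def ric₃ {n : ℕ} (R : Fin n → Fin n → Fin n → Fin n → ℂ) (i l : Fin n) : ℂ :=
  ∑ k, R i k k l

/-- Fourth Chern Ricci contraction: `Ric⁽⁴⁾_{kj̄} = ∑ᵢ R_{ij̄kī}`. -/
def ric₄ {n : ℕ} (R : Fin n → Fin n → Fin n → Fin n → ℂ) (k j : Fin n) : ℂ :=
  ∑ i, R i j k i

/-- Chern scalar curvature: the trace of `Ric⁽¹⁾`. -/
def scal {n : ℕ} (R : Fin n → Fin n → Fin n → Fin n → ℂ) : ℂ :=
  ∑ i, ric₁ R i i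

/-- The standard Hermitian inner product `g_{ij̄} = δ_{ij}`. -/
def g {n : ℕ} (i j : Fin n) : ℂ := if i = j then 1 else 0

section Contraction

variable {n : ℕ}

theorem sum_g_diag : ∑ k : Fin n, g k k = n := by
  simp [g]

theorem sum_g_mul (a : Fin n) (f : Fin n → ℂ) : ∑ k, g a k * f k = f a := by
  simp [g]

theorem sum_mul_g (b : Fin n) (f : Fin n → ℂ) : ∑ k, f k * g k b = f b := by
  simp [g]

theorem sum_g_mul_g (a b : Fin n) : ∑ k, g a k * g k b = g a b :=
  sum_g_mul a (g · b)

variable (R : Fin n → Fin n → Fin n → Fin n → ℂ) (a b : Fin n)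

theorem trace_symmetrized_ricci_mul_g :
    ∑ k, (ric₁ R a b * g k k + ric₁ R k b * g a k + ric₁ R a k * g k b + ric₁ R k k * g a b)
      = (n + 2) * ric₁ R a b + scal R * g a b := by
  simp only [sum_add_distrib, ← mul_sum, ← sum_mul, mul_comm (ric₁ R _ b) (g a _), sum_g_diag,
    sum_g_mul, sum_mul_g, scal]
  ring

theorem trace_symmetrized_curvature :
    ∑ k, (R a b k k + R k b a k + R a k k b + R k k a b)
      = ric₁ R a b + ric₂ R a b + ric₃ R a b + ric₄ R a b := by
  simp only [sum_add_distrib, ric₁, ric₂, ric₃, ric₄]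
  ring

theorem trace_symmetrized_g_mul_g :
    ∑ k, (g a b * g k k + g a k * g k b) = (n + 1) * g a b := by
  rw [sum_add_distrib, ← mul_sum, sum_g_diag, sum_g_mul_g]
  ring

end Contraction

theorem trace_of_symmetrized_identity_general
    (n : ℕ)
    (R : Fin n → Fin n → Fin n → Fin n → ℂ)
    (α β c : ℝ)
    (hsym : ∀ i j k l : Fin n,
      (α : ℂ) * (ric₁ R i j * g k l + ric₁ R k j * g i l
          + ric₁ R i l * g k j + ric₁ R k l * g i j)
        + (β : ℂ) * (R i j k l + R k j i l + R i l k j + R k l i j)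
      = 2 * (c : ℂ) * (g i j * g k l + g i l * g k j)) :
    ∀ a b : Fin n,
      ((α * (n + 2) + β : ℝ) : ℂ) * ric₁ R a b + (β : ℂ) * ric₂ R a b
          + (β : ℂ) * (ric₃ R a b + ric₄ R a b)
        = (((2 * (n + 1) * c : ℝ) : ℂ) - (α : ℂ) * scal R) * g a b := by
  intro a b
  have traced := sum_congr rfl fun k (_ : k ∈ univ) => hsym a b k k
  rw [sum_add_distrib, ← mul_sum, ← mul_sum, ← mul_sum, trace_symmetrized_ricci_mul_g,
    trace_symmetrized_curvature, trace_symmetrized_g_mul_g] at traced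
  push_cast
  linear_combination traced

/-- Equation (3.11) of Lemma 3.1: taking the trace of the symmetrized mixed-curvature
constancy identity yields
`(α(n+2)+β)Ric⁽¹⁾ + βRic⁽²⁾ + β(Ric⁽³⁾+Ric⁽⁴⁾) = (2(n+1)c − αu)g`. -/
theorem trace_of_symmetrized_identity
    (n : ℕ) (hn : 1 ≤ n)
    (R : Fin n → Fin n → Fin n → Fin n → ℂ)
    (hherm : ∀ i j k l, R i j k l = (starRingEnd ℂ) (R j i l k))
    (α β c : ℝ)
    (hsym : ∀ i j k l : Fin n,
      (α : ℂ) * (ric₁ R i j * g k l + ric₁ R k j * g i l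
          + ric₁ R i l * g k j + ric₁ R k l * g i j)
        + (β : ℂ) * (R i j k l + R k j i l + R i l k j + R k l i j)
      = 2 * (c : ℂ) * (g i j * g k l + g i l * g k j)) :
    ∀ a b : Fin n,
      ((α * (n + 2) + β : ℝ) : ℂ) * ric₁ R a b + (β : ℂ) * ric₂ R a b
          + (β : ℂ) * (ric₃ R a b + ric₄ R a b)
        = (((2 * (n + 1) * c : ℝ) : ℂ) - (α : ℂ) * scal R) * g a b :=
  trace_of_symmetrized_identity_general n R α β c hsym

end Stmt4
end
end

section
/- Let n ≥ 1, z ∈ C^n \ {0}, and R_{ij̄kl̄} = −(z̄ᵢ zⱼ / |z|²)δ_{kl} + δ_{ij}δ_{kl}, with R_{ij̄} = Σₖ R_{ij̄kk̄} and g_{ij̄} = δ_{ij}. Then for all indices i,j,k,l: (R_{ij̄} g_{kl̄} + R_{kj̄} g_{il̄} + R_{il̄} g_{kj̄} + R_{kl̄} g_{ij̄}) − n·(R_{ij̄kl̄} + R_{kj̄il̄} + R_{il̄kj̄} + R_{kl̄ij̄}) = 0. Consequently, if nα + β = 0, the standard Hopf metric has identically zero mixed curvature C_{α,β}, yet R is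 not identically zero (for n ≥ 1, R_{1̄11̄1} ≠ 0 at points with z = (t,0,...,0), t ≠ 0). -/
/-!
The Hopf curvature has the form `R_{ij̄kl̄} = A_{ij̄} g_{kl̄}` with `A_{ij̄} = δ_{ij} − z̄ᵢzⱼ/|z|²`.
For every tensor of this shape the Ricci contraction is `R_{ij̄} = n A_{ij̄}`, so the symmetrised
Ricci term is exactly `n` times the symmetrised curvature term, and `C_{α,β}` is their combination
with coefficient `nα + β`. Still `R_{1̄11̄1} = 1` wherever `z₁ = 0`.
-/

open BigOperators Finset

noncomputable section

namespace Stmt8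

/-- Kronecker delta (= the standard metric `g_{ij̄}` in a unitary frame). -/
def g {n : ℕ} (i j : Fin n) : ℂ := if i = j then 1 else 0

/-- The Chern curvature of the standard Hopf metric in a unitary frame:
`R_{ij̄kl̄} = −(z̄ᵢ zⱼ / |z|²)·δ_{kl} + δ_{ij} δ_{kl}`. -/
def hopfR {n : ℕ} (z : Fin n → ℂ) (i j k l : Fin n) : ℂ :=
  -((starRingEnd ℂ) (z i) * z j / ((∑ m, Complex.normSq (z m) : ℝ) : ℂ)) * g k l
    + g i j * g k l

/-- First Ricci contraction: `R_{ij̄} = ∑ₖ R_{ij̄kk̄}`. -/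
def ric₁ {n : ℕ} (R : Fin n → Fin n → Fin n → Fin n → ℂ) (i j : Fin n) : ℂ :=
  ∑ k, R i j k k

section

variable {n : ℕ}

theorem sum_g_self : ∑ k : Fin n, g k k = n := by
  simp [g]

theorem ric₁_eq_of_eq_mul_g {R : Fin n → Fin n → Fin n → Fin n → ℂ} {A : Fin n → Fin n → ℂ}
    (hR : ∀ i j k l, R i j k l = A i j * g k l) (i j : Fin n) :
    ric₁ R i j = n * A i j := by
  simp only [ric₁, hR, ← mul_sum, sum_g_self, mul_comm]

-- The mixed curvature is `C_{α,β} = α • ricSym R + β • curvSym R`.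
def ricSym (R : Fin n → Fin n → Fin n → Fin n → ℂ) (i j k l : Fin n) : ℂ :=
  ric₁ R i j * g k l + ric₁ R k j * g i l + ric₁ R i l * g k j + ric₁ R k l * g i j

def curvSym (R : Fin n → Fin n → Fin n → Fin n → ℂ) (i j k l : Fin n) : ℂ :=
  R i j k l + R k j i l + R i l k j + R k l i j

theorem ricSym_eq_of_eq_mul_g {R : Fin n → Fin n → Fin n → Fin n → ℂ} {A : Fin n → Fin n → ℂ}
    (hR : ∀ i j k l, R i j k l = A i j * g k l) (i j k l : Fin n) :
    ricSym R i j k l = n * curvSym R i j k l := by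
  simp only [ricSym, curvSym, ric₁_eq_of_eq_mul_g hR, hR]
  ring

theorem hopfR_eq_mul_g (z : Fin n → ℂ) (i j k l : Fin n) :
    hopfR z i j k l =
      (g i j - (starRingEnd ℂ) (z i) * z j / ((∑ m, Complex.normSq (z m) : ℝ) : ℂ)) * g k l := by
  rw [hopfR]
  ring

theorem hopfR_self_of_eq_zero {z : Fin n → ℂ} {i : Fin n} (hzi : z i = 0) :
    hopfR z i i i i = 1 := by
  simp [hopfR, g, hzi]

end

theorem hopf_mixed_curvature_vanishes_but_not_flat_general
    (n : ℕ) (hn : 1 ≤ n) (z : Fin n → ℂ) :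
    (∀ i j k l : Fin n,
        (ric₁ (hopfR z) i j * g k l + ric₁ (hopfR z) k j * g i l
            + ric₁ (hopfR z) i l * g k j + ric₁ (hopfR z) k l * g i j)
          - (n : ℂ) * (hopfR z i j k l + hopfR z k j i l + hopfR z i l k j + hopfR z k l i j)
        = 0)
      ∧ (∀ α β : ℝ, n * α + β = 0 →
          ∀ i j k l : Fin n,
            (α : ℂ) * (ric₁ (hopfR z) i j * g k l + ric₁ (hopfR z) k j * g i l
                + ric₁ (hopfR z) i l * g k j + ric₁ (hopfR z) k l * g i j)
              + (β : ℂ) * (hopfR z i j k l + hopfR z k j i l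
                  + hopfR z i l k j + hopfR z k l i j)
            = 0)
      ∧ (∀ t : ℂ, t ≠ 0 → 2 ≤ n →
          hopfR (n := n) (fun i => if i = (⟨0, hn⟩ : Fin n) then t else 0)
            ≠ fun _ _ _ _ => 0) := by
  have hsym := ricSym_eq_of_eq_mul_g (hopfR_eq_mul_g z)
  refine ⟨fun i j k l => sub_eq_zero.mpr (hsym i j k l), ?_, ?_⟩
  · intro α β hαβ i j k l
    have hαβ' : (n : ℂ) * α + β = 0 := by exact_mod_cast hαβ
    change α * ricSym (hopfR z) i j k l + β * curvSym (hopfR z) i j k l = 0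
    linear_combination curvSym (hopfR z) i j k l * hαβ' + α * hsym i j k l
  · intro t _ hn2 hflat
    have hne : (⟨1, hn2⟩ : Fin n) ≠ ⟨0, hn⟩ := by simp
    have hone := hopfR_self_of_eq_zero
      (z := fun i => if i = (⟨0, hn⟩ : Fin n) then t else 0) (if_neg hne)
    rw [hflat] at hone
    exact zero_ne_one hone

/-- Identity (3.34): for the Hopf curvature tensor,
`(R_{ij̄}g_{kl̄} + R_{kj̄}g_{il̄} + R_{il̄}g_{kj̄} + R_{kl̄}g_{ij̄}) − n(R_{ij̄kl̄} + R_{kj̄il̄} + R_{il̄kj̄} + R_{kl̄ij̄}) = 0`.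
Consequently, if `nα + β = 0` the mixed curvature `C_{α,β}` vanishes identically, yet
the curvature is not identically zero: `R_{1̄11̄1} ≠ 0` at points `z = (t,0,…,0)`, `t ≠ 0`. -/
theorem hopf_mixed_curvature_vanishes_but_not_flat
    (n : ℕ) (hn : 1 ≤ n) (z : Fin n → ℂ) (hz : z ≠ 0) :
    (∀ i j k l : Fin n,
        (ric₁ (hopfR z) i j * g k l + ric₁ (hopfR z) k j * g i l
            + ric₁ (hopfR z) i l * g k j + ric₁ (hopfR z) k l * g i j)
          - (n : ℂ) * (hopfR z i j k l + hopfR z k j i l + hopfR z i l k j + hopfR z k l i j)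
        = 0)
      ∧ (∀ α β : ℝ, n * α + β = 0 →
          ∀ i j k l : Fin n,
            (α : ℂ) * (ric₁ (hopfR z) i j * g k l + ric₁ (hopfR z) k j * g i l
                + ric₁ (hopfR z) i l * g k j + ric₁ (hopfR z) k l * g i j)
              + (β : ℂ) * (hopfR z i j k l + hopfR z k j i l
                  + hopfR z i l k j + hopfR z k l i j)
            = 0)
      ∧ (∀ t : ℂ, t ≠ 0 → 2 ≤ n →
          hopfR (n := n) (fun i => if i = (⟨0, hn⟩ : Fin n) then t else 0)
            ≠ fun _ _ _ _ => 0) :=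
  hopf_mixed_curvature_vanishes_but_not_flat_general n hn z

end Stmt8
end
end

section
/- Let α, β ∈ ℝ with 2α+β ≠ 0 and let x, y be smooth real-valued functions on a complex surface (locally, functions of coordinates z₁, z₂) satisfying: y − x = (α+β)/(2α+β) is constant, ∂x/∂z̄₂ = 0, and ∂y/∂z̄₁ = 0, where x = F_{1̄1} and y = F_{2̄2} are second derivatives of a function F with F_{1̄2} = 0. Then Δx = x_{1̄1} = y_{1̄1} = 0 and Δy = 0, so ΔF = x + y is harmonic; on a compact manifold this forces ΔF constant, hence F constant. -/
noncomputable section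

namespace Stmt12

/-- Wirtinger derivative `∂/∂z₁` of a function on `ℂ²`. -/
def dz1 (f : ℂ × ℂ → ℂ) (p : ℂ × ℂ) : ℂ :=
  (1 / 2 : ℂ) * (fderiv ℝ f p (1, 0) - Complex.I * fderiv ℝ f p (Complex.I, 0))

/-- Wirtinger derivative `∂/∂z̄₁` of a function on `ℂ²`. -/
def dzb1 (f : ℂ × ℂ → ℂ) (p : ℂ × ℂ) : ℂ :=
  (1 / 2 : ℂ) * (fderiv ℝ f p (1, 0) + Complex.I * fderiv ℝ f p (Complex.I, 0))

/-- Wirtinger derivative `∂/∂z₂` of a function on `ℂ²`. -/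
def dz2 (f : ℂ × ℂ → ℂ) (p : ℂ × ℂ) : ℂ :=
  (1 / 2 : ℂ) * (fderiv ℝ f p (0, 1) - Complex.I * fderiv ℝ f p (0, Complex.I))

/-- Wirtinger derivative `∂/∂z̄₂` of a function on `ℂ²`. -/
def dzb2 (f : ℂ × ℂ → ℂ) (p : ℂ × ℂ) : ℂ :=
  (1 / 2 : ℂ) * (fderiv ℝ f p (0, 1) + Complex.I * fderiv ℝ f p (0, Complex.I))

private lemma D_smooth {f : ℂ × ℂ → ℂ} (hf : ContDiff ℝ (⊤ : ℕ∞) f) (v : ℂ × ℂ) :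
    ContDiff ℝ (⊤ : ℕ∞) (fun p => fderiv ℝ f p v) :=
  (hf.fderiv_right (by simp)).clm_apply contDiff_const

private lemma D_comm {f : ℂ × ℂ → ℂ} (hf : ContDiff ℝ (⊤ : ℕ∞) f) (v w : ℂ × ℂ) (p : ℂ × ℂ) :
    fderiv ℝ (fun q => fderiv ℝ f q w) p v = fderiv ℝ (fun q => fderiv ℝ f q v) p w := by
  have hd : Differentiable ℝ (fderiv ℝ f) :=
    (hf.fderiv_right (m := 1) (WithTop.coe_le_coe.mpr le_top)).differentiable one_ne_zero
  have h1 : ∀ u z : ℂ × ℂ, fderiv ℝ (fun q => fderiv ℝ f q u) p z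
      = fderiv ℝ (fderiv ℝ f) p z u := by
    intro u z
    rw [fderiv_clm_apply (hd p) (differentiableAt_const u)]
    simp
  rw [h1, h1]
  exact (hf.contDiffAt.isSymmSndFDerivAt (by rw [minSmoothness_of_isRCLikeNormedField]; exact WithTop.coe_le_coe.mpr le_top)) v w

private lemma fderiv_comb {g h : ℂ × ℂ → ℂ} {p : ℂ × ℂ}
    (hg : DifferentiableAt ℝ g p) (hh : DifferentiableAt ℝ h p) (a b : ℂ) (u : ℂ × ℂ) :
    fderiv ℝ (fun q => a * g q + b * h q) p u = a * fderiv ℝ g p u + b * fderiv ℝ h p u := by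
  rw [fderiv_fun_add (hg.const_mul a) (hh.const_mul b), fderiv_const_mul hg a,
    fderiv_const_mul hh b]
  simp

private lemma wirt_comm {f : ℂ × ℂ → ℂ} (hf : ContDiff ℝ (⊤ : ℕ∞) f) (v w : ℂ × ℂ) (p : ℂ × ℂ) :
    (1/2 : ℂ) * (fderiv ℝ (fun q => (1/2 : ℂ) * (fderiv ℝ f q v - Complex.I * fderiv ℝ f q w)) p v
      + Complex.I * fderiv ℝ (fun q => (1/2 : ℂ) * (fderiv ℝ f q v - Complex.I * fderiv ℝ f q w)) p w)
    = (1/2 : ℂ) * (fderiv ℝ (fun q => (1/2 : ℂ) * (fderiv ℝ f q v + Complex.I * fderiv ℝ f q w)) p v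
      - Complex.I * fderiv ℝ (fun q => (1/2 : ℂ) * (fderiv ℝ f q v + Complex.I * fderiv ℝ f q w)) p w) := by
  have hv := (D_smooth hf v).differentiable (by simp) p
  have hw := (D_smooth hf w).differentiable (by simp) p
  have e1 : ∀ u, fderiv ℝ (fun q => (1/2 : ℂ) * (fderiv ℝ f q v - Complex.I * fderiv ℝ f q w)) p u
      = (1/2 : ℂ) * fderiv ℝ (fun q => fderiv ℝ f q v) p u
        + (-(1/2 : ℂ) * Complex.I) * fderiv ℝ (fun q => fderiv ℝ f q w) p u := by
    intro u
    have hfun : (fun q => (1/2 : ℂ) * (fderiv ℝ f q v - Complex.I * fderiv ℝ f q w))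
        = fun q => (1/2 : ℂ) * fderiv ℝ f q v + (-(1/2 : ℂ) * Complex.I) * fderiv ℝ f q w := by
      funext q; ring
    rw [hfun, fderiv_comb hv hw]
  have e2 : ∀ u, fderiv ℝ (fun q => (1/2 : ℂ) * (fderiv ℝ f q v + Complex.I * fderiv ℝ f q w)) p u
      = (1/2 : ℂ) * fderiv ℝ (fun q => fderiv ℝ f q v) p u
        + ((1/2 : ℂ) * Complex.I) * fderiv ℝ (fun q => fderiv ℝ f q w) p u := by
    intro u
    have hfun : (fun q => (1/2 : ℂ) * (fderiv ℝ f q v + Complex.I * fderiv ℝ f q w))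
        = fun q => (1/2 : ℂ) * fderiv ℝ f q v + ((1/2 : ℂ) * Complex.I) * fderiv ℝ f q w := by
      funext q; ring
    rw [hfun, fderiv_comb hv hw]
  rw [e1 v, e1 w, e2 v, e2 w, D_comm hf v w]
  ring

private lemma comm1 {f : ℂ × ℂ → ℂ} (hf : ContDiff ℝ (⊤ : ℕ∞) f) (p : ℂ × ℂ) :
    dzb1 (dz1 f) p = dz1 (dzb1 f) p := by
  exact wirt_comm hf (1, 0) (Complex.I, 0) p

private lemma comm2 {f : ℂ × ℂ → ℂ} (hf : ContDiff ℝ (⊤ : ℕ∞) f) (p : ℂ × ℂ) :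
    dzb2 (dz2 f) p = dz2 (dzb2 f) p := by
  exact wirt_comm hf (0, 1) (0, Complex.I) p

private lemma dz1_smooth {f : ℂ × ℂ → ℂ} (hf : ContDiff ℝ (⊤ : ℕ∞) f) : ContDiff ℝ (⊤ : ℕ∞) (dz1 f) := by
  unfold dz1
  exact contDiff_const.mul ((D_smooth hf _).sub (contDiff_const.mul (D_smooth hf _)))

private lemma dzb1_smooth {f : ℂ × ℂ → ℂ} (hf : ContDiff ℝ (⊤ : ℕ∞) f) : ContDiff ℝ (⊤ : ℕ∞) (dzb1 f) := by
  unfold dzb1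
  exact contDiff_const.mul ((D_smooth hf _).add (contDiff_const.mul (D_smooth hf _)))

private lemma dz2_smooth {f : ℂ × ℂ → ℂ} (hf : ContDiff ℝ (⊤ : ℕ∞) f) : ContDiff ℝ (⊤ : ℕ∞) (dz2 f) := by
  unfold dz2
  exact contDiff_const.mul ((D_smooth hf _).sub (contDiff_const.mul (D_smooth hf _)))

private lemma dzb2_smooth {f : ℂ × ℂ → ℂ} (hf : ContDiff ℝ (⊤ : ℕ∞) f) : ContDiff ℝ (⊤ : ℕ∞) (dzb2 f) := by
  unfold dzb2
  exact contDiff_const.mul ((D_smooth hf _).add (contDiff_const.mul (D_smooth hf _)))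

private lemma dzb1_add {g h : ℂ × ℂ → ℂ} {p : ℂ × ℂ}
    (hg : DifferentiableAt ℝ g p) (hh : DifferentiableAt ℝ h p) :
    dzb1 (fun q => g q + h q) p = dzb1 g p + dzb1 h p := by
  simp only [dzb1, fderiv_fun_add hg hh, ContinuousLinearMap.add_apply]
  ring

private lemma dzb2_add {g h : ℂ × ℂ → ℂ} {p : ℂ × ℂ}
    (hg : DifferentiableAt ℝ g p) (hh : DifferentiableAt ℝ h p) :
    dzb2 (fun q => g q + h q) p = dzb2 g p + dzb2 h p := by
  simp only [dzb2, fderiv_fun_add hg hh, ContinuousLinearMap.add_apply]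
  ring

private lemma dz1_add {g h : ℂ × ℂ → ℂ} {p : ℂ × ℂ}
    (hg : DifferentiableAt ℝ g p) (hh : DifferentiableAt ℝ h p) :
    dz1 (fun q => g q + h q) p = dz1 g p + dz1 h p := by
  simp only [dz1, fderiv_fun_add hg hh, ContinuousLinearMap.add_apply]
  ring

private lemma dz2_add {g h : ℂ × ℂ → ℂ} {p : ℂ × ℂ}
    (hg : DifferentiableAt ℝ g p) (hh : DifferentiableAt ℝ h p) :
    dz2 (fun q => g q + h q) p = dz2 g p + dz2 h p := by
  simp only [dz2, fderiv_fun_add hg hh, ContinuousLinearMap.add_apply]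
  ring

private lemma dz1_zero_of {g : ℂ × ℂ → ℂ} (hg : ∀ p, g p = 0) (p : ℂ × ℂ) : dz1 g p = 0 := by
  have : g = fun _ => (0 : ℂ) := funext hg
  simp [this, dz1]

private lemma dz2_zero_of {g : ℂ × ℂ → ℂ} (hg : ∀ p, g p = 0) (p : ℂ × ℂ) : dz2 g p = 0 := by
  have : g = fun _ => (0 : ℂ) := funext hg
  simp [this, dz2]

/-- Local computation in case (2) of the proof of Theorem 1.2: if `x = F_{1̄1}`,
`y = F_{2̄2}` satisfy `F_{1̄2} = 0`, `y − x = (α+β)/(2α+β)` constant, `x_{2̄} = 0` and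
`y_{1̄} = 0`, then `x_{1̄1} = y_{1̄1} = 0`, `Δx = Δy = 0`, and `ΔF = x + y` is harmonic. -/
theorem conformal_factor_harmonic
    (α β : ℝ) (hαβ : 2 * α + β ≠ 0)
    (F : ℂ × ℂ → ℂ) (hF : ContDiff ℝ (⊤ : ℕ∞) F)
    (x y : ℂ × ℂ → ℂ)
    (hx : x = fun p => dzb1 (dz1 F) p)
    (hy : y = fun p => dzb2 (dz2 F) p)
    (h12 : ∀ p, dzb2 (dz1 F) p = 0)
    (hconst : ∀ p, y p - x p = (((α + β) / (2 * α + β) : ℝ) : ℂ))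
    (hx2 : ∀ p, dzb2 x p = 0)
    (hy1 : ∀ p, dzb1 y p = 0) :
    (∀ p, dzb1 (dz1 x) p = 0) ∧ (∀ p, dzb1 (dz1 y) p = 0)
      ∧ (∀ p, dzb1 (dz1 x) p + dzb2 (dz2 x) p = 0)
      ∧ (∀ p, dzb1 (dz1 y) p + dzb2 (dz2 y) p = 0)
      ∧ (∀ p, dzb1 (dz1 (fun q => x q + y q)) p + dzb2 (dz2 (fun q => x q + y q)) p = 0) := by
  set c : ℂ := (((α + β) / (2 * α + β) : ℝ) : ℂ) with hc
  have hxs : ContDiff ℝ (⊤ : ℕ∞) x := by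
    rw [hx]; exact dzb1_smooth (dz1_smooth hF)
  have hys : ContDiff ℝ (⊤ : ℕ∞) y := by
    rw [hy]; exact dzb2_smooth (dz2_smooth hF)
  have hyx : y = fun q => x q + c := funext fun p => eq_add_of_sub_eq' (by
    have := hconst p; linear_combination this)
  -- dz1 y = dz1 x and dz2 y = dz2 x
  have hdz1 : dz1 y = dz1 x := by
    funext p
    simp [hyx, dz1, fderiv_add_const]
  have hdz2 : dz2 y = dz2 x := by
    funext p
    simp [hyx, dz2, fderiv_add_const]
  -- dzb1 (dz1 y) = 0
  have hy0 : ∀ p, dzb1 (dz1 y) p = 0 := by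
    intro p
    rw [comm1 hys p]
    exact dz1_zero_of hy1 p
  have hx0 : ∀ p, dzb1 (dz1 x) p = 0 := by
    intro p
    rw [← hdz1]; exact hy0 p
  have hx0' : ∀ p, dzb2 (dz2 x) p = 0 := by
    intro p
    rw [comm2 hxs p]
    exact dz2_zero_of hx2 p
  have hy0' : ∀ p, dzb2 (dz2 y) p = 0 := by
    intro p
    rw [hdz2]; exact hx0' p
  refine ⟨hx0, hy0, fun p => by rw [hx0 p, hx0' p, add_zero],
    fun p => by rw [hy0 p, hy0' p, add_zero], ?_⟩
  intro p
  have hxd := hxs.differentiable (by simp)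
  have hyd := hys.differentiable (by simp)
  have h1 : dz1 (fun q => x q + y q) = fun q => dz1 x q + dz1 y q :=
    funext fun q => dz1_add (hxd q) (hyd q)
  have h2 : dz2 (fun q => x q + y q) = fun q => dz2 x q + dz2 y q :=
    funext fun q => dz2_add (hxd q) (hyd q)
  have hd1x := (dz1_smooth hxs).differentiable (by simp) p
  have hd1y := (dz1_smooth hys).differentiable (by simp) p
  have hd2x := (dz2_smooth hxs).differentiable (by simp) p
  have hd2y := (dz2_smooth hys).differentiable (by simp) p
  rw [h1, h2, dzb1_add hd1x hd1y, dzb2_add hd2x hd2y, hx0 p, hy0 p, hx0' p, hy0' p]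
  ring

end Stmt12
end
end
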